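/- arXiv:2112.14196 — 2 statements merged into one kernel-verified Lean document; each statement's English description precedes it below -/
import Mathlib

section
/- There exists a constant C > 0 such that for all ε ∈ (0,1) the discrete inner boundary satisfies #∂Ω_ε ≤ C ε^{1−d}. -/
open scoped Classical MeasureTheory
open Filter MeasureTheory Set

noncomputable section

/-- A bounded Lipschitz domain in `ℝ^d` containing locally, near every boundary point and
up to an isometry of `ℝ^d`, the open region strictly above the graph of a Lipschitz function. -/
def IsLipschitzDomain (d : ℕ) (Ω : Set (EuclideanSpace ℝ (Fin d))) : Prop :=
  IsOpen Ω ∧ IsConnected Ω ∧ Bornology.IsBounded Ω ∧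
    ∀ p ∈ frontier Ω, ∃ U ∈ nhds p,
      ∃ (φ : EuclideanSpace ℝ (Fin d) ≃ᵢ EuclideanSpace ℝ (Fin d)) (j : Fin d)
        (L : NNReal) (g : (Fin d → ℝ) → ℝ),
        LipschitzWith L g ∧
          ∀ x ∈ U, (x ∈ Ω ↔ g (fun i => if i = j then 0 else φ x i) < φ x j)

/-- The points of the rescaled lattice `εℤ^d`. -/
def latticePts (d : ℕ) (ε : ℝ) : Set (EuclideanSpace ℝ (Fin d)) :=
  {x | ∀ i, ∃ n : ℤ, x i = n * ε}

/-- The union of all closed segments joining nearest-neighbour points of `εℤ^d`. -/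
def gridSet (d : ℕ) (ε : ℝ) : Set (EuclideanSpace ℝ (Fin d)) :=
  ⋃ x ∈ latticePts d ε, ⋃ y ∈ latticePts d ε, ⋃ (_ : dist x y = ε), segment ℝ x y

/-- The discrete domain `Ω_ε`. -/
def discDomain {d : ℕ} (Ω : Set (EuclideanSpace ℝ (Fin d))) (ε : ℝ) :
    Set (EuclideanSpace ℝ (Fin d)) :=
  connectedComponentIn (Ω ∩ gridSet d ε) 0 ∩ latticePts d ε

/-- The discrete inner boundary `∂Ω_ε`. -/
def innerBdry {d : ℕ} (Ω : Set (EuclideanSpace ℝ (Fin d))) (ε : ℝ) :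
    Set (EuclideanSpace ℝ (Fin d)) :=
  {x ∈ discDomain Ω ε | ({y ∈ discDomain Ω ε | dist x y = ε}).ncard < 2 * d}

/-!
A point of `∂Ω_ε` misses one of its `2d` lattice neighbours `y`; the grid segment from it to `y`
must then leave `Ω`, so the point lies within `ε` of `∂Ω`. Distinct lattice points are `ε` apart,
so the balls of radius `ε / 2` around the points of `∂Ω_ε` are disjoint and lie in the
`3ε / 2`-neighbourhood of `∂Ω`. Covering the compact set `∂Ω` by finitely many Lipschitz charts,
in each of which a `δ`-neighbourhood of `∂Ω` lies in a slab of width `O(δ)` around a Lipschitz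
graph, shows that this neighbourhood has volume `O(δ)`. Comparing volumes gives
`#∂Ω_ε · ε^d = O(ε)`.
-/

open scoped ENNReal NNReal
open Metric Topology

lemma IsPreconnected.inter_frontier_nonempty_of_not_subset {X : Type*} [TopologicalSpace X]
    {s u : Set X} (hs : IsPreconnected s) (hu : IsOpen u) (hsu : (s ∩ u).Nonempty)
    (hnsub : ¬s ⊆ u) : (s ∩ frontier u).Nonempty := by
  by_contra! h
  refine hnsub (hs.subset_of_closure_inter_subset hu hsu fun z ⟨hzc, hzs⟩ => ?_)
  by_contra hzu
  exact Set.eq_empty_iff_forall_notMem.1 h z ⟨hzs, hzc, by rwa [hu.interior_eq]⟩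

lemma ncard_mul_le_measure_thickening {X : Type*} [PseudoMetricSpace X] [MeasurableSpace X]
    [OpensMeasurableSpace X] (μ : Measure X) {T : Set X} {r : ℝ} {m : ℝ≥0∞}
    (hT : T.Pairwise fun x y => 2 * r ≤ dist x y) (hm : ∀ x ∈ T, m ≤ μ (ball x r)) :
    T.ncard * m ≤ μ (thickening r T) := by
  obtain hinf | hfin := T.infinite_or_finite
  · simp [hinf.ncard]
  lift T to Finset X using hfin
  have hdisj : (T : Set X).PairwiseDisjoint fun x => ball x r := fun x hx y hy hxy =>
    ball_disjoint_ball (by linarith [hT hx hy hxy])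
  calc (T : Set X).ncard * m = ∑ x ∈ T, m := by simp
    _ ≤ ∑ x ∈ T, μ (ball x r) := Finset.sum_le_sum hm
    _ = μ (thickening r T) := by
      rw [thickening_eq_biUnion_ball, Finset.set_biUnion_coe,
        measure_biUnion_finset hdisj fun _ _ => measurableSet_ball]

section CthickeningVolume

variable {X : Type*} [MetricSpace X] [ProperSpace X] [MeasurableSpace X] (μ : Measure X)
  {F : Set X}

lemma exists_eventually_measure_cthickening_le (hF : IsCompact F)
    (hloc : ∀ p ∈ F, ∃ U ∈ 𝓝 p, ∃ K ≠ ∞,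
      ∀ᶠ δ in 𝓝[>] 0, μ (cthickening δ (F ∩ U)) ≤ K * ENNReal.ofReal δ) :
    ∃ K ≠ ∞, ∀ᶠ δ in 𝓝[>] 0, μ (cthickening δ F) ≤ K * ENNReal.ofReal δ := by
  choose! U hU K hK hKU using hloc
  obtain ⟨t, htF, hcover⟩ := hF.elim_nhds_subcover U hU
  refine ⟨∑ p ∈ t, K p, ENNReal.sum_ne_top.2 fun p hp => hK p (htF p hp), ?_⟩
  filter_upwards [(t.eventually_all).2 fun p hp => hKU p (htF p hp), self_mem_nhdsWithin]
    with δ hδ (hδ0 : 0 < δ)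
  have hsub : cthickening δ F ⊆ ⋃ p ∈ t, cthickening δ (F ∩ U p) := by
    rw [hF.isClosed.cthickening_eq_biUnion_closedBall hδ0.le]
    refine Set.iUnion₂_subset fun q hq z hz => ?_
    obtain ⟨p, hp, hqp⟩ := Set.mem_iUnion₂.1 (hcover hq)
    exact Set.mem_biUnion hp (mem_cthickening_of_dist_le z q δ _ ⟨hq, hqp⟩ hz)
  calc μ (cthickening δ F) ≤ ∑ p ∈ t, μ (cthickening δ (F ∩ U p)) :=
        (measure_mono hsub).trans (measure_biUnion_finset_le t _)
    _ ≤ ∑ p ∈ t, K p * ENNReal.ofReal δ := Finset.sum_le_sum hδ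
    _ = (∑ p ∈ t, K p) * ENNReal.ofReal δ := (Finset.sum_mul ..).symm

lemma exists_measure_cthickening_le_of_eventually [IsFiniteMeasureOnCompacts μ]
    (hF : IsCompact F) {K : ℝ≥0∞} (hK : K ≠ ∞)
    (h : ∀ᶠ δ in 𝓝[>] 0, μ (cthickening δ F) ≤ K * ENNReal.ofReal δ) (δ₀ : ℝ) :
    ∃ K' ≠ ∞, ∀ δ ∈ Set.Ioc 0 δ₀, μ (cthickening δ F) ≤ K' * ENNReal.ofReal δ := by
  obtain ⟨r, hr, hrh⟩ := mem_nhdsGT_iff_exists_Ioo_subset.1 h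
  set M := μ (cthickening δ₀ F)
  have hM : M ≠ ∞ := hF.cthickening.measure_lt_top.ne
  have hr0 : ENNReal.ofReal r ≠ 0 := by simpa using hr
  refine ⟨K + M / ENNReal.ofReal r, by finiteness, fun δ ⟨hδ0, hδ⟩ => ?_⟩
  rcases lt_or_ge δ r with hδr | hrδ
  · exact (hrh ⟨hδ0, hδr⟩).trans (by gcongr; exact le_self_add)
  calc μ (cthickening δ F) ≤ M := measure_mono (cthickening_mono hδ F)
    _ = M / ENNReal.ofReal r * ENNReal.ofReal r := (ENNReal.div_mul_cancel hr0 (by simp)).symm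
    _ ≤ (K + M / ENNReal.ofReal r) * ENNReal.ofReal δ := by gcongr; exact le_add_self

end CthickeningVolume

lemma volume_prod_setOf_dist_le {Y : Type*} [MeasurableSpace Y] (ν : Measure Y) [SFinite ν]
    {G : Y → ℝ} (hG : Measurable G) {S : Set Y} (hS : MeasurableSet S) (a : ℝ) :
    (volume.prod ν) {p : ℝ × Y | p.2 ∈ S ∧ dist p.1 (G p.2) ≤ a} =
      ENNReal.ofReal (2 * a) * ν S := by
  have hm : MeasurableSet {p : ℝ × Y | p.2 ∈ S ∧ dist p.1 (G p.2) ≤ a} :=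
    (measurable_snd hS).inter
      (measurableSet_le (measurable_fst.dist (hG.comp measurable_snd)) measurable_const)
  rw [Measure.prod_apply_symm hm, ← lintegral_indicator_const hS]
  refine lintegral_congr fun y => ?_
  by_cases hy : y ∈ S
  · rw [Set.indicator_of_mem hy, ← Real.volume_closedBall (G y)]
    congr 1
    ext t
    simp [hy]
  · simp [hy]

lemma IsometryEquiv.measurePreserving_volume {E F : Type*} [NormedAddCommGroup E]
    [InnerProductSpace ℝ E] [FiniteDimensional ℝ E] [MeasurableSpace E] [BorelSpace E]
    [NormedAddCommGroup F] [InnerProductSpace ℝ F] [FiniteDimensional ℝ F] [MeasurableSpace F]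
    [BorelSpace F] (φ : E ≃ᵢ F) : MeasurePreserving φ volume volume := by
  have hφ : ⇑φ = (· + φ 0) ∘ φ.toRealLinearIsometryEquiv := by
    funext x
    simp [IsometryEquiv.toRealLinearIsometryEquiv_apply]
  rw [hφ]
  exact (measurePreserving_add_right volume (φ 0)).comp
    φ.toRealLinearIsometryEquiv.measurePreserving

lemma exists_eq_pi_single_of_sum_sq_eq_one {ι : Type*} [Fintype ι] {k : ι → ℤ}
    (h : ∑ i, k i ^ 2 = 1) : ∃ i, IsUnit (k i) ∧ k = Pi.single i (k i) := by
  obtain ⟨i, hi⟩ : ∃ i, k i ≠ 0 := by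
    by_contra! h0
    simp [h0] at h
  have hsplit := Finset.add_sum_erase Finset.univ (fun j => k j ^ 2) (Finset.mem_univ i)
  have hki : k i ^ 2 = 1 := by
    have : 0 ≤ ∑ j ∈ Finset.univ.erase i, k j ^ 2 := Finset.sum_nonneg fun j _ => sq_nonneg _
    nlinarith [Int.one_le_abs hi, sq_abs (k i)]
  have hrest : ∀ j ∈ Finset.univ.erase i, k j ^ 2 = 0 :=
    (Finset.sum_eq_zero_iff_of_nonneg fun j _ => sq_nonneg _).1 (by omega)
  refine ⟨i, Int.isUnit_iff.2 (sq_eq_one_iff.1 hki), funext fun j => ?_⟩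
  rcases eq_or_ne j i with rfl | hj
  · simp
  · simpa [hj] using hrest j (Finset.mem_erase.2 ⟨hj, Finset.mem_univ j⟩)

section Lattice

variable {d : ℕ} {ε : ℝ} {x y : EuclideanSpace ℝ (Fin d)}

lemma exists_int_sub_eq_of_mem_latticePts (hx : x ∈ latticePts d ε) (hy : y ∈ latticePts d ε) :
    ∃ k : Fin d → ℤ, ∀ i, y i - x i = k i * ε := by
  choose m hm using hx
  choose n hn using hy
  exact ⟨n - m, fun i => by simp [hm, hn, sub_mul]⟩

lemma le_dist_of_mem_latticePts (hx : x ∈ latticePts d ε) (hy : y ∈ latticePts d ε)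
    (hxy : x ≠ y) : ε ≤ dist x y := by
  obtain ⟨k, hk⟩ := exists_int_sub_eq_of_mem_latticePts hx hy
  obtain ⟨i, hi⟩ : ∃ i, x i ≠ y i := by
    by_contra! h
    exact hxy (PiLp.ext h)
  have hki : k i ≠ 0 := fun h0 => hi (by linarith [hk i, show (k i : ℝ) * ε = 0 by simp [h0]])
  calc ε ≤ |ε| := le_abs_self ε
    _ ≤ |(k i : ℝ)| * |ε| :=
      le_mul_of_one_le_left (abs_nonneg ε) (by exact_mod_cast Int.one_le_abs hki)
    _ = dist (x i) (y i) := by rw [dist_comm, Real.dist_eq, hk i, abs_mul]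
    _ ≤ dist x y := PiLp.dist_apply_le x y i

lemma add_single_mem_latticePts (hx : x ∈ latticePts d ε) (i : Fin d) (k : ℤ) :
    x + EuclideanSpace.single i (k * ε) ∈ latticePts d ε := by
  intro j
  obtain ⟨n, hn⟩ := hx j
  by_cases hj : j = i
  · subst hj
    exact ⟨n + k, by simp [hn, add_mul]⟩
  · exact ⟨n, by simp [hj, hn]⟩

lemma eq_add_single_of_dist_eq (hε : ε ≠ 0) (hx : x ∈ latticePts d ε)
    (hy : y ∈ latticePts d ε) (hxy : dist x y = ε) :
    ∃ i, ∃ u : ℤˣ, y = x + EuclideanSpace.single i ((u : ℤ) * ε) := by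
  obtain ⟨k, hk⟩ := exists_int_sub_eq_of_mem_latticePts hx hy
  have hsum : ∑ i, k i ^ 2 = 1 := by
    have h2 : ε ^ 2 * ∑ i, (k i : ℝ) ^ 2 = ε ^ 2 := calc
      _ = ∑ i, dist (x i) (y i) ^ 2 := by
        rw [Finset.mul_sum]
        refine Finset.sum_congr rfl fun i _ => ?_
        rw [dist_comm, Real.dist_eq, sq_abs, hk i]
        ring
      _ = ε ^ 2 := by rw [← hxy, EuclideanSpace.dist_eq, Real.sq_sqrt (by positivity)]
    exact_mod_cast (mul_eq_left₀ (pow_ne_zero 2 hε)).1 h2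
  obtain ⟨i, hu, hki⟩ := exists_eq_pi_single_of_sum_sq_eq_one hsum
  refine ⟨i, hu.unit, PiLp.ext fun j => ?_⟩
  have hkj := hk j
  rw [hki] at hkj
  rcases eq_or_ne j i with rfl | hj
  · simp at hkj ⊢
    linarith
  · simp [hj] at hkj ⊢
    linarith

lemma ncard_latticePts_dist_eq (hε : 0 < ε) (hx : x ∈ latticePts d ε) :
    {y ∈ latticePts d ε | dist x y = ε}.ncard = 2 * d := by
  set f : Fin d × ℤˣ → EuclideanSpace ℝ (Fin d) :=
    fun p => x + EuclideanSpace.single p.1 ((p.2 : ℤ) * ε)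
  have hrange : {y ∈ latticePts d ε | dist x y = ε} = Set.range f := by
    ext y
    constructor
    · rintro ⟨hy, hxy⟩
      obtain ⟨i, u, rfl⟩ := eq_add_single_of_dist_eq hε.ne' hx hy hxy
      exact ⟨(i, u), rfl⟩
    · rintro ⟨⟨i, u⟩, rfl⟩
      refine ⟨add_single_mem_latticePts hx i u, ?_⟩
      rcases Int.units_eq_one_or u with rfl | rfl <;>
        simp [f, dist_self_add_right, PiLp.norm_single, abs_of_pos hε]
  have hf : Function.Injective f := by
    rintro ⟨i, u⟩ ⟨i', u'⟩ h
    have h' := congrArg (fun v : EuclideanSpace ℝ (Fin d) => v i) (add_left_cancel h)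
    rcases eq_or_ne i i' with rfl | hii'
    · simp only [PiLp.single_apply] at h'
      simp [Units.ext (by exact_mod_cast mul_right_cancel₀ hε.ne' h')]
    · simp [hii', hε.ne'] at h'
  rw [hrange, Set.ncard_range_of_injective hf, Nat.card_prod, Nat.card_eq_fintype_card,
    Nat.card_eq_fintype_card, Fintype.card_units_int, Fintype.card_fin, mul_comm]

variable {Ω : Set (EuclideanSpace ℝ (Fin d))}

lemma exists_dist_eq_notMem_discDomain (hε : 0 < ε) (hx : x ∈ innerBdry Ω ε) :
    ∃ y ∈ latticePts d ε, dist x y = ε ∧ y ∉ discDomain Ω ε := by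
  by_contra! h
  have hnbr : {y ∈ discDomain Ω ε | dist x y = ε} = {y ∈ latticePts d ε | dist x y = ε} :=
    Set.ext fun y => ⟨fun hy => ⟨hy.1.2, hy.2⟩, fun hy => ⟨h y hy.1 hy.2, hy.2⟩⟩
  have hcard := hx.2
  rw [hnbr, ncard_latticePts_dist_eq hε hx.1.2] at hcard
  exact lt_irrefl _ hcard

lemma mem_cthickening_frontier_of_mem_innerBdry (hΩ : IsOpen Ω) (hε : 0 < ε)
    (hx : x ∈ innerBdry Ω ε) : x ∈ cthickening ε (frontier Ω) := by
  obtain ⟨y, hy, hxy, hyΩ⟩ := exists_dist_eq_notMem_discDomain hε hx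
  obtain ⟨hx0, hxlat⟩ := hx.1
  have hseg : segment ℝ x y ⊆ gridSet d ε := fun z hz =>
    Set.mem_biUnion hxlat (Set.mem_biUnion hy (Set.mem_iUnion_of_mem hxy hz))
  have hsegΩ : ¬segment ℝ x y ⊆ Ω := fun hsub => hyΩ
    ⟨connectedComponentIn_eq hx0 ▸ (convex_segment x y).isPreconnected.subset_connectedComponentIn
      (left_mem_segment ℝ x y) (Set.subset_inter hsub hseg) (right_mem_segment ℝ x y), hy⟩
  obtain ⟨z, hz, hzΩ⟩ := (convex_segment x y).isPreconnected.inter_frontier_nonempty_of_not_subset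
    hΩ ⟨x, left_mem_segment ℝ x y, (connectedComponentIn_subset _ _ hx0).1⟩ hsegΩ
  refine mem_cthickening_of_dist_le x z ε _ hzΩ ?_
  linarith [dist_add_dist_of_mem_segment hz, dist_nonneg (x := z) (y := y)]

end Lattice

def graphHeight {d : ℕ} (φ : EuclideanSpace ℝ (Fin d) ≃ᵢ EuclideanSpace ℝ (Fin d)) (j : Fin d)
    (g : (Fin d → ℝ) → ℝ) (x : EuclideanSpace ℝ (Fin d)) : ℝ :=
  φ x j - g (fun i => if i = j then 0 else φ x i)

section GraphHeight

variable {d : ℕ} {φ : EuclideanSpace ℝ (Fin d) ≃ᵢ EuclideanSpace ℝ (Fin d)} {j : Fin d}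
  {g : (Fin d → ℝ) → ℝ}

lemma lipschitzWith_graphHeight {L : ℝ≥0} (hg : LipschitzWith L g) :
    LipschitzWith (1 + L) (graphHeight φ j g) := by
  have hcoord : LipschitzWith 1 fun x => φ x j := LipschitzWith.of_dist_le_mul fun x y => by
    simpa [φ.dist_eq] using PiLp.dist_apply_le (φ x) (φ y) j
  have hflat : LipschitzWith 1 fun x => (fun i => if i = j then 0 else φ x i : Fin d → ℝ) :=
    LipschitzWith.of_dist_le_mul fun x y => by
      rw [NNReal.coe_one, one_mul, dist_pi_le_iff dist_nonneg]
      intro i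
      split_ifs
      · simp
      · exact (PiLp.dist_apply_le _ _ i).trans (φ.dist_eq x y).le
  have h := hcoord.sub (hg.comp hflat)
  rwa [mul_one] at h

lemma graphHeight_eq_zero_of_mem_frontier {Ω U : Set (EuclideanSpace ℝ (Fin d))}
    {q : EuclideanSpace ℝ (Fin d)} (hΩ : IsOpen Ω) (hh : Continuous (graphHeight φ j g))
    (hU : U ∈ 𝓝 q) (hchart : ∀ x ∈ U, (x ∈ Ω ↔ g (fun i => if i = j then 0 else φ x i) < φ x j))
    (hq : q ∈ frontier Ω) : graphHeight φ j g q = 0 := by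
  have hchart' : ∀ x ∈ U, (x ∈ Ω ↔ 0 < graphHeight φ j g x) := fun x hx => by
    rw [hchart x hx, graphHeight, sub_pos]
  have hqΩ : q ∉ Ω := fun h => (hΩ.inter_frontier_eq.subset ⟨h, hq⟩ : q ∈ (∅ : Set _))
  refine le_antisymm (not_lt.1 fun h => hqΩ ((hchart' q (mem_of_mem_nhds hU)).2 h))
    (not_lt.1 fun h => ?_)
  obtain ⟨z, ⟨hz, hzU⟩, hzΩ⟩ := mem_closure_iff_nhds.1 (frontier_subset_closure hq) _
    (Filter.inter_mem (hh.continuousAt.eventually_lt continuousAt_const h) hU)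
  exact lt_asymm hz ((hchart' z hzU).1 hzΩ)

lemma volume_setOf_abs_graphHeight_le {n : ℕ}
    {φ : EuclideanSpace ℝ (Fin (n + 1)) ≃ᵢ EuclideanSpace ℝ (Fin (n + 1))} {j : Fin (n + 1)}
    {g : (Fin (n + 1) → ℝ) → ℝ} (hg : Measurable g) (p : EuclideanSpace ℝ (Fin (n + 1)))
    {r : ℝ} (hr : 0 ≤ r) (a : ℝ) :
    volume {z | dist z p ≤ r ∧ |graphHeight φ j g z| ≤ a} ≤
      ENNReal.ofReal (2 * a) * ENNReal.ofReal ((2 * r) ^ n) := by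
  set M := φ.toHomeomorph.toMeasurableEquiv.trans ((MeasurableEquiv.toLp 2 _).symm.trans
    (MeasurableEquiv.piFinSuccAbove (fun _ => ℝ) j))
  have hM : MeasurePreserving M volume (volume.prod volume) := by
    rw [← Measure.volume_eq_prod]
    exact ((volume_preserving_piFinSuccAbove _ j).comp
      (EuclideanSpace.volume_preserving_symm_measurableEquiv_toLp _)).comp
      φ.measurePreserving_volume
  set G : (Fin n → ℝ) → ℝ := fun v => g (j.insertNth 0 v)
  have hG : Measurable G := hg.comp
    ((MeasurableEquiv.piFinSuccAbove (fun _ => ℝ) j).symm.measurable.comp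
      (measurable_const.prodMk measurable_id))
  have hsub : {z | dist z p ≤ r ∧ |graphHeight φ j g z| ≤ a} ⊆
      M ⁻¹' {w | w.2 ∈ closedBall (j.removeNth (φ p).ofLp) r ∧ dist w.1 (G w.2) ≤ a} := by
    rintro z ⟨hzp, hza⟩
    refine ⟨(dist_pi_le_iff hr).2 fun i => ?_, ?_⟩
    · exact (PiLp.dist_apply_le (φ z) (φ p) _).trans ((φ.dist_eq z p).trans_le hzp)
    · have hz : graphHeight φ j g z = φ z j - G (j.removeNth (φ z).ofLp) := by
        simp only [graphHeight, G, Fin.insertNth_removeNth]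
        congr 2
        funext i
        rw [Function.update_apply]
      show dist (φ z j) (G (j.removeNth (φ z).ofLp)) ≤ a
      rwa [Real.dist_eq, ← hz]
  calc _ ≤ _ := measure_mono hsub
    _ = _ := hM.measure_preimage_equiv _
    _ = _ := by
      rw [volume_prod_setOf_dist_le _ hG measurableSet_closedBall, Real.volume_pi_closedBall _ hr,
        Fintype.card_fin]

end GraphHeight

namespace IsLipschitzDomain

variable {d : ℕ} {Ω : Set (EuclideanSpace ℝ (Fin d))}

lemma exists_volume_cthickening_frontier_inter_le (hΩ : IsLipschitzDomain d Ω)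
    {p : EuclideanSpace ℝ (Fin d)} (hp : p ∈ frontier Ω) :
    ∃ U ∈ 𝓝 p, ∃ K ≠ ∞,
      ∀ᶠ δ in 𝓝[>] 0, volume (cthickening δ (frontier Ω ∩ U)) ≤ K * ENNReal.ofReal δ := by
  obtain ⟨U, hU, φ, j, L, g, hg, hchart⟩ := hΩ.2.2.2 p hp
  obtain ⟨n, rfl⟩ : ∃ n, d = n + 1 := Nat.exists_eq_add_one.2 j.pos
  obtain ⟨r, hr, hrU⟩ := nhds_basis_closedBall.mem_iff.1 hU
  have hh := lipschitzWith_graphHeight (φ := φ) (j := j) hg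
  refine ⟨closedBall p (r / 2), closedBall_mem_nhds p (half_pos hr),
    ENNReal.ofReal (2 * (1 + L)) * ENNReal.ofReal ((2 * r) ^ n), by finiteness, ?_⟩
  filter_upwards [Ioc_mem_nhdsGT (half_pos hr)] with δ ⟨hδ0, hδr⟩
  have hsub : cthickening δ (frontier Ω ∩ closedBall p (r / 2)) ⊆
      {z | dist z p ≤ r ∧ |graphHeight φ j g z| ≤ (1 + L) * δ} := by
    rw [(isClosed_frontier.inter isClosed_closedBall).cthickening_eq_biUnion_closedBall hδ0.le]
    refine Set.iUnion₂_subset fun q ⟨hqF, hqp⟩ z hzq => ?_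
    rw [mem_closedBall] at hqp hzq
    have hUq : U ∈ 𝓝 q := Filter.mem_of_superset
      (isOpen_ball.mem_nhds (mem_ball.2 (by linarith))) (ball_subset_closedBall.trans hrU)
    have hq0 := graphHeight_eq_zero_of_mem_frontier hΩ.1 hh.continuous hUq hchart hqF
    refine ⟨by linarith [dist_triangle z q p], ?_⟩
    have hzq' := hh.dist_le_mul z q
    rw [Real.dist_eq, hq0, sub_zero] at hzq'
    calc _ ≤ _ := hzq'
      _ ≤ (1 + L) * δ := by push_cast; gcongr
  calc _ ≤ _ := measure_mono hsub
    _ ≤ _ := volume_setOf_abs_graphHeight_le hg.continuous.measurable p hr.le _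
    _ = _ := by
      rw [← mul_assoc, ENNReal.ofReal_mul (by positivity)]
      ring

lemma exists_volume_cthickening_frontier_le (hΩ : IsLipschitzDomain d Ω) (δ₀ : ℝ) :
    ∃ K ≠ ∞, ∀ δ ∈ Set.Ioc 0 δ₀,
      volume (cthickening δ (frontier Ω)) ≤ K * ENNReal.ofReal δ := by
  have hF : IsCompact (frontier Ω) :=
    hΩ.2.2.1.isCompact_closure.of_isClosed_subset isClosed_frontier frontier_subset_closure
  obtain ⟨K, hK, h⟩ := exists_eventually_measure_cthickening_le volume hF
    fun p hp => hΩ.exists_volume_cthickening_frontier_inter_le hp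
  exact exists_measure_cthickening_le_of_eventually volume hF hK h δ₀

lemma exists_ncard_innerBdry_mul_pow_le (hΩ : IsLipschitzDomain d Ω) :
    ∃ C > 0, ∀ ε ∈ Set.Ioo (0 : ℝ) 1, (innerBdry Ω ε).ncard * ε ^ d ≤ C * ε := by
  obtain ⟨K, hK, hKb⟩ := hΩ.exists_volume_cthickening_frontier_le (3 / 2)
  set c := volume (ball (0 : EuclideanSpace ℝ (Fin d)) 1)
  have hc : 0 < c.toReal :=
    ENNReal.toReal_pos (measure_ball_pos _ _ one_pos).ne' measure_ball_lt_top.ne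
  refine ⟨3 * 2 ^ d * K.toReal / (2 * c.toReal) + 1, by positivity, fun ε ⟨hε, hε1⟩ => ?_⟩
  have hsep : (innerBdry Ω ε).Pairwise fun x y => 2 * (ε / 2) ≤ dist x y :=
    fun x hx y hy hxy => by
      rw [mul_div_cancel₀ _ two_ne_zero]
      exact le_dist_of_mem_latticePts hx.1.2 hy.1.2 hxy
  have hsub : thickening (ε / 2) (innerBdry Ω ε) ⊆ cthickening (3 / 2 * ε) (frontier Ω) := calc
    _ ⊆ thickening (ε / 2) (cthickening ε (frontier Ω)) :=
      thickening_subset_of_subset _ fun x hx => mem_cthickening_frontier_of_mem_innerBdry hΩ.1 hε hx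
    _ ⊆ thickening (ε / 2 + ε) (frontier Ω) := thickening_cthickening_subset _ hε.le _
    _ ⊆ _ := by
      rw [show ε / 2 + ε = 3 / 2 * ε by ring]
      exact thickening_subset_cthickening _ _
  have hvol : ((innerBdry Ω ε).ncard : ℝ≥0∞) * (ENNReal.ofReal ((ε / 2) ^ d) * c) ≤
      K * ENNReal.ofReal (3 / 2 * ε) := calc
    _ ≤ volume (thickening (ε / 2) (innerBdry Ω ε)) :=
      ncard_mul_le_measure_thickening volume hsep fun x _ => by
        rw [Measure.addHaar_ball_of_pos _ _ (half_pos hε), finrank_euclideanSpace_fin]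
    _ ≤ _ := measure_mono hsub
    _ ≤ _ := hKb _ ⟨by positivity, by linarith⟩
  have hreal := ENNReal.toReal_mono (by finiteness) hvol
  rw [ENNReal.toReal_mul, ENNReal.toReal_mul, ENNReal.toReal_mul, ENNReal.toReal_natCast,
    ENNReal.toReal_ofReal (by positivity), ENNReal.toReal_ofReal (by positivity), div_pow] at hreal
  have hmain : ((innerBdry Ω ε).ncard : ℝ) * ε ^ d ≤ 3 * 2 ^ d * K.toReal / (2 * c.toReal) * ε := by
    rw [div_mul_eq_mul_div, le_div_iff₀ (by positivity)]
    calc ((innerBdry Ω ε).ncard : ℝ) * ε ^ d * (2 * c.toReal)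
        = 2 * 2 ^ d * ((innerBdry Ω ε).ncard * (ε ^ d / 2 ^ d * c.toReal)) := by field_simp
      _ ≤ 2 * 2 ^ d * (K.toReal * (3 / 2 * ε)) := by gcongr
      _ = 3 * 2 ^ d * K.toReal * ε := by ring
  linarith

end IsLipschitzDomain

theorem discrete_inner_boundary_card_bound_general
    (d : ℕ) (Ω : Set (EuclideanSpace ℝ (Fin d)))
    (hΩ : IsLipschitzDomain d Ω) :
    ∃ C > (0:ℝ), ∀ ε ∈ Set.Ioo (0:ℝ) 1,
      ((innerBdry Ω ε).ncard : ℝ) ≤ C * ε ^ ((1:ℝ) - d) := by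
  obtain ⟨C, hC, hbound⟩ := hΩ.exists_ncard_innerBdry_mul_pow_le
  refine ⟨C, hC, fun ε hε => ?_⟩
  rw [Real.rpow_sub hε.1, Real.rpow_one, Real.rpow_natCast, mul_div_assoc',
    le_div_iff₀ (pow_pos hε.1 d)]
  exact hbound ε hε

/-- For a bounded Lipschitz domain `Ω ∋ 0` in `ℝ^d`, `d ≥ 2`, there is a
constant `C > 0` such that `#∂Ω_ε ≤ C ε^{1-d}` for all `ε ∈ (0,1)`. -/
theorem discrete_inner_boundary_card_bound
    (d : ℕ) (hd : 2 ≤ d) (Ω : Set (EuclideanSpace ℝ (Fin d)))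
    (hΩ : IsLipschitzDomain d Ω) (h0 : (0 : EuclideanSpace ℝ (Fin d)) ∈ Ω) :
    ∃ C > (0:ℝ), ∀ ε ∈ Set.Ioo (0:ℝ) 1,
      ((innerBdry Ω ε).ncard : ℝ) ≤ C * ε ^ ((1:ℝ) - d) :=
  discrete_inner_boundary_card_bound_general d Ω hΩ

end
end

section
/- For every uniformly bounded and uniformly equicontinuous family F of bounded continuous functions ℝ^d → ℝ one has lim_{ε→0} sup_{f∈F} | ε^d Σ_{x∈Ω_ε} f(x) − ∫_Ω f(x) dx | = 0 (the integral with respect to Lebesgue measure on Ω). In particular there exists C ≥ 1 such that C^{-1} ≤ ε^d · #Ω_ε ≤ C for all ε ∈ (0,1). -/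
open scoped Classical MeasureTheory
open Filter MeasureTheory Set

noncomputable section

/-!
Attach to each `x ∈ Ω_ε` the cube `x + [0, ε)^d`. These cubes are disjoint and have total volume
`ε^d · #Ω_ε`, so the Riemann sum differs from the integral over their union `T_ε = cubeCover Ω ε`
by at most the oscillation of `f` at scale `dε` times `vol T_ε`, which is uniformly small over an
equicontinuous family. It remains to see that `vol (T_ε \ Ω)` and `vol (Ω \ T_ε)` tend to `0`.
Points of `T_ε \ Ω` lie within `dε` of `∂Ω`, which is Lebesgue-null since it is locally a
Lipschitz graph. Conversely, take the connected component of `0` among the points farther than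
`2dε` from `Ωᶜ`. Two close points of it round down to neighbouring lattice points, which the grid
joins inside `Ω`; so by connectedness every point of it rounds down into `Ω_ε`, i.e. the component
lies in `T_ε`. These components exhaust `Ω` as `ε → 0`. For `f = 1` this gives
`ε^d · #Ω_ε → vol Ω > 0`, whence the two-sided bound.
-/

open scoped Topology
open Metric

lemma abs_floor_sub_floor_le_one {a b : ℝ} (h : |a - b| < 1) : |⌊a⌋ - ⌊b⌋| ≤ 1 := by
  rw [abs_sub_lt_iff] at h
  have h₁ : ⌊a⌋ < ⌊b⌋ + 2 := by
    have := Int.floor_le a; have := Int.lt_floor_add_one b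
    exact_mod_cast (by linarith : (⌊a⌋ : ℝ) < ⌊b⌋ + 2)
  have h₂ : ⌊b⌋ < ⌊a⌋ + 2 := by
    have := Int.floor_le b; have := Int.lt_floor_add_one a
    exact_mod_cast (by linarith : (⌊b⌋ : ℝ) < ⌊a⌋ + 2)
  rw [abs_le]
  constructor <;> omega

lemma tendsto_const_mul_nhdsGT_zero (c : ℝ) : Tendsto (fun ε : ℝ => c * ε) (𝓝[>] 0) (𝓝 0) :=
  ((continuous_const_mul c).tendsto' 0 0 (mul_zero c)).mono_left nhdsWithin_le_nhds

lemma frontier_inter_subset_of_mem_iff_lt {X : Type*} [TopologicalSpace X] {Ω U : Set X}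
    (hΩ : IsOpen Ω) (hU : IsOpen U) {a b : X → ℝ} (ha : Continuous a) (hb : Continuous b)
    (h : ∀ x ∈ U, x ∈ Ω ↔ a x < b x) : frontier Ω ∩ U ⊆ {x | a x = b x} := by
  rintro x ⟨hxΩ, hxU⟩
  have hx : x ∉ Ω := fun hx => (hΩ.inter_frontier_eq.subset ⟨hx, hxΩ⟩ : x ∈ (∅ : Set X))
  refine le_antisymm ?_ (not_lt.1 fun hlt => hx ((h x hxU).2 hlt))
  have : x ∈ closure (U ∩ Ω) := hU.inter_closure ⟨hxU, hxΩ.1⟩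
  exact closure_lt_subset_le ha hb (closure_mono (fun y hy => (h y hy.1).1 hy.2) this)

lemma measure_prod_graph_eq_zero {α : Type*} [MeasurableSpace α] (μ : Measure α) [SFinite μ]
    {c : α → ℝ} (hc : Measurable c) : (volume.prod μ) {p : ℝ × α | p.1 = c p.2} = 0 := by
  rw [Measure.prod_apply_symm (s := {p : ℝ × α | p.1 = c p.2})
    (measurableSet_eq_fun measurable_fst (hc.comp measurable_snd))]
  simp

section Integral

variable {α : Type*} [MeasurableSpace α] {μ : Measure α}

lemma abs_measureReal_mul_sub_setIntegral_le {s : Set α} (hs : μ s < ⊤) {f : α → ℝ}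
    (hf : IntegrableOn f s μ) {c η : ℝ} (h : ∀ y ∈ s, |f y - c| ≤ η) :
    |μ.real s * c - ∫ y in s, f y ∂μ| ≤ η * μ.real s := by
  have hc : IntegrableOn (fun _ => c) s μ := integrableOn_const hs.ne
  rw [← smul_eq_mul, ← setIntegral_const, ← integral_sub hc hf, ← Real.norm_eq_abs]
  exact norm_setIntegral_le_of_norm_le_const hs fun y hy => by
    rw [Real.norm_eq_abs, abs_sub_comm]; exact h y hy

lemma abs_setIntegral_sub_setIntegral_le {s t : Set α} (hs : MeasurableSet s) (ht : MeasurableSet t)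
    (hsμ : μ s < ⊤) (htμ : μ t < ⊤) {f : α → ℝ} (hf : AEStronglyMeasurable f μ) {M : ℝ}
    (hM : ∀ x, |f x| ≤ M) :
    |∫ x in s, f x ∂μ - ∫ x in t, f x ∂μ| ≤ M * (μ.real (s \ t) + μ.real (t \ s)) := by
  have hM' (x : α) : ‖f x‖ ≤ M := (Real.norm_eq_abs (f x)).trans_le (hM x)
  have hint {u : Set α} (hu : μ u < ⊤) : IntegrableOn f u μ :=
    Measure.integrableOn_of_bounded hu.ne hf (Eventually.of_forall hM')
  have hbound {u : Set α} (hu : μ u < ⊤) : |∫ x in u, f x ∂μ| ≤ M * μ.real u := by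
    rw [← Real.norm_eq_abs]
    exact norm_setIntegral_le_of_norm_le_const hu fun x _ => hM' x
  rw [← integral_inter_add_sdiff ht (hint hsμ), ← integral_inter_add_sdiff hs (hint htμ),
    inter_comm, add_sub_add_left_eq_sub, mul_add]
  exact (abs_sub _ _).trans (add_le_add (hbound ((measure_mono sdiff_subset).trans_lt hsμ))
    (hbound ((measure_mono sdiff_subset).trans_lt htμ)))

end Integral

namespace DiscreteDomain

variable {d : ℕ} {ε : ℝ} {Ω : Set (EuclideanSpace ℝ (Fin d))}

lemma dist_le_dist_of_forall_abs_sub_le {x y z : EuclideanSpace ℝ (Fin d)}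
    (h : ∀ i, |x i - z i| ≤ |y i - z i|) : dist x z ≤ dist y z := by
  simp only [EuclideanSpace.dist_eq, Real.dist_eq]
  exact Real.sqrt_le_sqrt <| Finset.sum_le_sum fun i _ => pow_le_pow_left₀ (abs_nonneg _) (h i) 2

lemma dist_le_mul_of_forall_abs_sub_le {x y : EuclideanSpace ℝ (Fin d)} {r : ℝ} (hr : 0 ≤ r)
    (h : ∀ i, |x i - y i| ≤ r) : dist x y ≤ d * r := by
  rw [EuclideanSpace.dist_eq]
  calc √(∑ i, dist (x i) (y i) ^ 2) ≤ √(∑ _i : Fin d, r ^ 2) := by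
        gcongr with i
        rw [Real.dist_eq]
        exact h i
    _ = √d * r := by
        rw [Finset.sum_const, Finset.card_univ, Fintype.card_fin, nsmul_eq_mul,
          Real.sqrt_mul (Nat.cast_nonneg _), Real.sqrt_sq hr]
    _ ≤ d * r := by
        gcongr
        rw [Real.sqrt_le_left d.cast_nonneg]
        exact_mod_cast Nat.le_self_pow two_ne_zero d

lemma dist_eq_abs_sub_of_forall_ne {x y : EuclideanSpace ℝ (Fin d)} {j : Fin d}
    (h : ∀ i ≠ j, x i = y i) : dist x y = |x j - y j| := by
  rw [EuclideanSpace.dist_eq, Finset.sum_eq_single j (fun i _ hi => by simp [h i hi]) (by simp),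
    Real.sqrt_sq_eq_abs, Real.dist_eq, abs_abs]

lemma zero_mem_latticePts : (0 : EuclideanSpace ℝ (Fin d)) ∈ latticePts d ε :=
  fun _ => ⟨0, by simp⟩

lemma segment_subset_gridSet {p q : EuclideanSpace ℝ (Fin d)} (hp : p ∈ latticePts d ε)
    (hq : q ∈ latticePts d ε) (hpq : dist p q = ε) : segment ℝ p q ⊆ gridSet d ε := by
  intro z hz
  simp only [gridSet, mem_iUnion]
  exact ⟨p, hp, q, hq, hpq, hz⟩

lemma mem_gridSet_of_mem_latticePts (hd : 0 < d) (hε : 0 < ε) {p : EuclideanSpace ℝ (Fin d)}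
    (hp : p ∈ latticePts d ε) : p ∈ gridSet d ε := by
  set j : Fin d := ⟨0, hd⟩
  set q := p + EuclideanSpace.single j ε
  have hq : q ∈ latticePts d ε := by
    intro i
    obtain ⟨n, hn⟩ := hp i
    rcases eq_or_ne i j with rfl | hi
    · exact ⟨n + 1, by simp [q, hn]; ring⟩
    · exact ⟨n, by simp [q, hi, hn]⟩
  refine segment_subset_gridSet hp hq ?_ (left_mem_segment ℝ p q)
  rw [dist_self_add_right, EuclideanSpace.single, PiLp.norm_single, Real.norm_of_nonneg hε.le]

lemma segment_subset_gridSet_of_forall_ne (hd : 0 < d) (hε : 0 < ε) {p q : EuclideanSpace ℝ (Fin d)}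
    (hp : p ∈ latticePts d ε) (hq : q ∈ latticePts d ε) {j : Fin d} (hpq : ∀ i ≠ j, p i = q i)
    (hj : |p j - q j| ≤ ε) : segment ℝ p q ⊆ gridSet d ε := by
  obtain ⟨a, ha⟩ := hp j
  obtain ⟨b, hb⟩ := hq j
  rcases eq_or_ne a b with rfl | hab
  · obtain rfl : p = q := by
      ext i
      by_cases hi : i = j
      · rw [hi, ha, hb]
      · exact hpq i hi
    simpa using mem_gridSet_of_mem_latticePts hd hε hp
  · have hab' : (1 : ℝ) ≤ |(a : ℝ) - b| := by exact_mod_cast Int.one_le_abs (sub_ne_zero.2 hab)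
    have hpqj : |p j - q j| = |(a : ℝ) - b| * ε := by
      rw [ha, hb, ← sub_mul, abs_mul, abs_of_pos hε]
    refine segment_subset_gridSet hp hq ?_
    rw [dist_eq_abs_sub_of_forall_ne hpq]
    nlinarith

lemma exists_isConnected_subset_gridSet (hd : 0 < d) (hε : 0 < ε)
    {p q : EuclideanSpace ℝ (Fin d)} (hp : p ∈ latticePts d ε) (hq : q ∈ latticePts d ε)
    (hpq : ∀ i, |q i - p i| ≤ ε) :
    ∃ K, IsConnected K ∧ K ⊆ gridSet d ε ∩ closedBall p (dist q p) ∧ p ∈ K ∧ q ∈ K := by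
  suffices h : ∀ s : Finset (Fin d), ∀ q ∈ latticePts d ε, (∀ i, |q i - p i| ≤ ε) →
      (∀ i ∉ s, q i = p i) →
      ∃ K, IsConnected K ∧ K ⊆ gridSet d ε ∩ closedBall p (dist q p) ∧ p ∈ K ∧ q ∈ K from
    h Finset.univ q hq hpq (by simp)
  intro s
  induction s using Finset.induction_on with
  | empty =>
    intro q hq _ hqp
    obtain rfl : q = p := by ext i; exact hqp i (Finset.notMem_empty i)
    exact ⟨{q}, isConnected_singleton, by simp [mem_gridSet_of_mem_latticePts hd hε hq], rfl, rfl⟩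
  | insert j s hj ih =>
    intro q hq hqp hqs
    set q' : EuclideanSpace ℝ (Fin d) := WithLp.toLp 2 (Function.update q j (p j))
    have hq'_apply (i : Fin d) : q' i = if i = j then p j else q i := by
      simp [q', Function.update_apply]
    have hq' : q' ∈ latticePts d ε := fun i => by
      rw [hq'_apply]; split_ifs
      exacts [hp j, hq i]
    have hq'p (i : Fin d) : |q' i - p i| ≤ |q i - p i| := by
      rw [hq'_apply]; split_ifs with h
      · simp [h]
      · exact le_rfl
    obtain ⟨K, hK, hKsub, hpK, hq'K⟩ := ih q' hq' (fun i => (hq'p i).trans (hqp i)) fun i hi => by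
      rw [hq'_apply]; split_ifs with h
      exacts [h ▸ rfl, hqs i (by simp [h, hi])]
    have hball : closedBall p (dist q' p) ⊆ closedBall p (dist q p) :=
      closedBall_subset_closedBall (dist_le_dist_of_forall_abs_sub_le hq'p)
    have hseg : segment ℝ q' q ⊆ gridSet d ε ∩ closedBall p (dist q p) :=
      subset_inter
        (segment_subset_gridSet_of_forall_ne hd hε hq' hq (j := j)
          (fun i hi => by rw [hq'_apply, if_neg hi])
          (by rw [hq'_apply, if_pos rfl, abs_sub_comm]; exact hqp j))
        ((convex_closedBall p _).segment_subset (hball (mem_closedBall.2 le_rfl))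
          (mem_closedBall.2 le_rfl))
    refine ⟨K ∪ segment ℝ q' q, hK.union ⟨q', hq'K, left_mem_segment ℝ q' q⟩
      ⟨⟨q', left_mem_segment ℝ q' q⟩, (convex_segment q' q).isPreconnected⟩, ?_,
      Or.inl hpK, Or.inr (right_mem_segment ℝ q' q)⟩
    exact union_subset (hKsub.trans (inter_subset_inter_right _ hball)) hseg

def latticeFloor (ε : ℝ) (y : EuclideanSpace ℝ (Fin d)) : EuclideanSpace ℝ (Fin d) :=
  WithLp.toLp 2 fun i => ⌊y i / ε⌋ * ε

lemma latticeFloor_mem_latticePts (ε : ℝ) (y : EuclideanSpace ℝ (Fin d)) :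
    latticeFloor ε y ∈ latticePts d ε :=
  fun i => ⟨⌊y i / ε⌋, rfl⟩

@[simp]
lemma latticeFloor_zero (ε : ℝ) : latticeFloor ε (0 : EuclideanSpace ℝ (Fin d)) = 0 := by
  ext i
  simp [latticeFloor]

lemma abs_latticeFloor_sub_le (hε : 0 < ε) {y y' : EuclideanSpace ℝ (Fin d)} (i : Fin d)
    (h : |y' i - y i| < ε) : |latticeFloor ε y' i - latticeFloor ε y i| ≤ ε := by
  have hfl := abs_floor_sub_floor_le_one (a := y' i / ε) (b := y i / ε)
    (by rwa [← sub_div, abs_div, abs_of_pos hε, div_lt_one hε])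
  have hfl' : |(⌊y' i / ε⌋ : ℝ) - ⌊y i / ε⌋| ≤ 1 := by exact_mod_cast hfl
  simp only [latticeFloor, PiLp.toLp_apply]
  rw [← sub_mul, abs_mul, abs_of_pos hε]
  nlinarith

def cube (ε : ℝ) (x : EuclideanSpace ℝ (Fin d)) : Set (EuclideanSpace ℝ (Fin d)) :=
  WithLp.ofLp ⁻¹' univ.pi fun i => Ico (x i) (x i + ε)

lemma mem_cube {x y : EuclideanSpace ℝ (Fin d)} :
    y ∈ cube ε x ↔ ∀ i, y i ∈ Ico (x i) (x i + ε) := by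
  simp [cube]

lemma measurableSet_cube (x : EuclideanSpace ℝ (Fin d)) : MeasurableSet (cube ε x) :=
  measurableSet_preimage (PiLp.volume_preserving_ofLp _).measurable
    (MeasurableSet.univ_pi fun _ => measurableSet_Ico)

lemma volume_cube (hε : 0 ≤ ε) (x : EuclideanSpace ℝ (Fin d)) :
    volume (cube ε x) = ENNReal.ofReal (ε ^ d) := by
  rw [cube, (PiLp.volume_preserving_ofLp _).measure_preimage
    (MeasurableSet.univ_pi fun _ => measurableSet_Ico).nullMeasurableSet, volume_pi_pi]
  simp [Real.volume_Ico, ENNReal.ofReal_pow hε]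

lemma dist_le_of_mem_cube (hε : 0 ≤ ε) {x y : EuclideanSpace ℝ (Fin d)} (hy : y ∈ cube ε x) :
    dist y x ≤ d * ε :=
  dist_le_mul_of_forall_abs_sub_le hε fun i => by
    have := mem_cube.1 hy i
    rw [abs_le]; constructor <;> linarith [this.1, this.2]

lemma mem_cube_latticeFloor (hε : 0 < ε) (y : EuclideanSpace ℝ (Fin d)) :
    y ∈ cube ε (latticeFloor ε y) := by
  refine mem_cube.2 fun i => ?_
  have h₁ := Int.floor_le (y i / ε)
  have h₂ := Int.lt_floor_add_one (y i / ε)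
  simp only [latticeFloor, PiLp.toLp_apply, mem_Ico]
  constructor
  · rwa [← le_div_iff₀ hε]
  · rw [← add_one_mul, ← div_lt_iff₀ hε]
    exact h₂

lemma latticeFloor_eq_of_mem_cube (hε : 0 < ε) {x y : EuclideanSpace ℝ (Fin d)}
    (hx : x ∈ latticePts d ε) (hy : y ∈ cube ε x) : latticeFloor ε y = x := by
  ext i
  obtain ⟨n, hn⟩ := hx i
  have := mem_cube.1 hy i
  rw [hn, mem_Ico] at this
  have hfl : ⌊y i / ε⌋ = n := by
    rw [Int.floor_eq_iff, le_div_iff₀ hε, div_lt_iff₀ hε, add_mul, one_mul]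
    exact this
  simp [latticeFloor, hfl, hn]

lemma pairwiseDisjoint_cube (hε : 0 < ε) :
    (latticePts d ε).PairwiseDisjoint (cube ε) := fun _ hx _ hx' hne =>
  disjoint_left.2 fun _ hy hy' =>
    hne ((latticeFloor_eq_of_mem_cube hε hx hy).symm.trans (latticeFloor_eq_of_mem_cube hε hx' hy'))

lemma discDomain_subset : discDomain Ω ε ⊆ latticePts d ε ∩ Ω :=
  fun _ hx => ⟨hx.2, (connectedComponentIn_subset _ _ hx.1).1⟩

lemma zero_mem_discDomain (hd : 0 < d) (hε : 0 < ε) (h0 : (0 : EuclideanSpace ℝ (Fin d)) ∈ Ω) :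
    (0 : EuclideanSpace ℝ (Fin d)) ∈ discDomain Ω ε :=
  ⟨mem_connectedComponentIn ⟨h0, mem_gridSet_of_mem_latticePts hd hε zero_mem_latticePts⟩,
    zero_mem_latticePts⟩

lemma volume_biUnion_cube (hε : 0 < ε) {t : Finset (EuclideanSpace ℝ (Fin d))}
    (ht : ↑t ⊆ latticePts d ε) : volume (⋃ x ∈ t, cube ε x) = t.card * ENNReal.ofReal (ε ^ d) := by
  rw [measure_biUnion_finset ((pairwiseDisjoint_cube hε).subset ht) fun _ _ => measurableSet_cube _]
  simp [volume_cube hε.le]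

lemma card_mul_le_volume_cthickening (hε : 0 < ε) {s : Set (EuclideanSpace ℝ (Fin d))}
    {t : Finset (EuclideanSpace ℝ (Fin d))} (ht : ↑t ⊆ latticePts d ε ∩ s) :
    t.card * ENNReal.ofReal (ε ^ d) ≤ volume (cthickening (d * ε) s) := by
  rw [← volume_biUnion_cube hε (ht.trans inter_subset_left)]
  refine measure_mono <| iUnion₂_subset fun x hx y hy => ?_
  exact mem_cthickening_of_dist_le y x _ s (ht hx).2 (dist_le_of_mem_cube hε.le hy)

lemma latticePts_inter_finite (hε : 0 < ε) {s : Set (EuclideanSpace ℝ (Fin d))}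
    (hs : Bornology.IsBounded s) : (latticePts d ε ∩ s).Finite := by
  refine Set.not_infinite.1 fun h => ?_
  have hV : volume (cthickening (d * ε) s) ≠ ⊤ := hs.cthickening.measure_lt_top.ne
  have hcube : ENNReal.ofReal (ε ^ d) ≠ 0 := by simp; positivity
  obtain ⟨n, hn⟩ := ENNReal.exists_nat_gt (ENNReal.div_lt_top hV hcube).ne
  obtain ⟨t, hts, rfl⟩ := h.exists_subset_card_eq n
  have := card_mul_le_volume_cthickening hε hts
  rw [ENNReal.div_lt_iff (Or.inl hcube) (Or.inl ENNReal.ofReal_ne_top)] at hn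
  exact absurd this (not_le.2 hn)

lemma discDomain_finite (hε : 0 < ε) (hΩ : Bornology.IsBounded Ω) : (discDomain Ω ε).Finite :=
  (latticePts_inter_finite hε hΩ).subset discDomain_subset

lemma pow_mul_ncard_discDomain_le (hε₀ : 0 < ε) (hε₁ : ε ≤ 1) (hΩ : Bornology.IsBounded Ω) :
    ε ^ d * (discDomain Ω ε).ncard ≤ volume.real (cthickening d Ω) := by
  have hfin := discDomain_finite hε₀ hΩ
  have h := card_mul_le_volume_cthickening hε₀ (s := Ω) (t := hfin.toFinset)
    (by simpa using discDomain_subset)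
  rw [← Set.ncard_eq_toFinset_card _ hfin] at h
  have h' := ENNReal.toReal_mono hΩ.cthickening.measure_lt_top.ne <|
    h.trans (measure_mono (cthickening_mono (mul_le_of_le_one_right d.cast_nonneg hε₁) Ω))
  rwa [ENNReal.toReal_mul, ENNReal.toReal_natCast, ENNReal.toReal_ofReal (by positivity), mul_comm,
    ← measureReal_def] at h'

lemma mem_of_notMem_cthickening_compl {δ : ℝ} {y z : EuclideanSpace ℝ (Fin d)}
    (hy : y ∉ cthickening δ Ωᶜ) (hz : dist z y ≤ δ) : z ∈ Ω :=
  by_contra fun hzΩ => hy (mem_cthickening_of_dist_le y z δ Ωᶜ hzΩ (dist_comm z y ▸ hz))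

lemma connectedComponentIn_latticeFloor_eq (hd : 0 < d) (hε : 0 < ε)
    {y y' : EuclideanSpace ℝ (Fin d)} (hy : y ∉ cthickening (2 * d * ε) Ωᶜ)
    (hyy' : dist y' y < ε) :
    connectedComponentIn (Ω ∩ gridSet d ε) (latticeFloor ε y) =
      connectedComponentIn (Ω ∩ gridSet d ε) (latticeFloor ε y') := by
  set p := latticeFloor ε y
  set q := latticeFloor ε y'
  have hpq (i : Fin d) : |q i - p i| ≤ ε :=
    abs_latticeFloor_sub_le hε i <| by
      simpa only [Real.dist_eq] using (PiLp.dist_apply_le y' y i).trans_lt hyy'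
  obtain ⟨K, hK, hKsub, hpK, hqK⟩ := exists_isConnected_subset_gridSet hd hε
    (latticeFloor_mem_latticePts ε y) (latticeFloor_mem_latticePts ε y') hpq
  have hKΩ : K ⊆ Ω := fun z hz => mem_of_notMem_cthickening_compl hy <|
    calc dist z y ≤ dist z p + dist y p := dist_triangle_right z y p
      _ ≤ d * ε + d * ε := add_le_add
          ((mem_closedBall.1 (hKsub hz).2).trans (dist_le_mul_of_forall_abs_sub_le hε.le hpq))
          (dist_le_of_mem_cube hε.le (mem_cube_latticeFloor hε y))
      _ = 2 * d * ε := by ring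
  exact connectedComponentIn_eq <| hK.isPreconnected.subset_connectedComponentIn hpK
    (subset_inter hKΩ fun z hz => (hKsub hz).1) hqK

lemma latticeFloor_mem_discDomain (hd : 0 < d) (hε : 0 < ε)
    {V : Set (EuclideanSpace ℝ (Fin d))} (hV : IsPreconnected V) (h0 : 0 ∈ V)
    (hVΩ : V ⊆ (cthickening (2 * d * ε) Ωᶜ)ᶜ) {y : EuclideanSpace ℝ (Fin d)} (hy : y ∈ V) :
    latticeFloor ε y ∈ discDomain Ω ε := by
  have hcomp : connectedComponentIn (Ω ∩ gridSet d ε) 0 =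
      connectedComponentIn (Ω ∩ gridSet d ε) (latticeFloor ε y) := by
    simpa only [latticeFloor_zero] using hV.induction₂
      (fun a b => connectedComponentIn (Ω ∩ gridSet d ε) (latticeFloor ε a) =
        connectedComponentIn (Ω ∩ gridSet d ε) (latticeFloor ε b))
      (fun a ha => mem_of_superset (mem_nhdsWithin_of_mem_nhds (ball_mem_nhds a hε)) fun b hb =>
        connectedComponentIn_latticeFloor_eq hd hε (hVΩ ha) hb)
      (fun _ _ _ _ _ _ => Eq.trans) (fun _ _ _ _ => Eq.symm) h0 hy
  have hyΩ : latticeFloor ε y ∈ Ω := mem_of_notMem_cthickening_compl (hVΩ hy) <| by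
    rw [dist_comm]
    exact (dist_le_of_mem_cube hε.le (mem_cube_latticeFloor hε y)).trans
      (by nlinarith [d.cast_nonneg (α := ℝ)])
  refine ⟨hcomp ▸ mem_connectedComponentIn ⟨hyΩ, ?_⟩, latticeFloor_mem_latticePts ε y⟩
  exact mem_gridSet_of_mem_latticePts hd hε (latticeFloor_mem_latticePts ε y)

lemma iUnion_connectedComponentIn_compl_cthickening (hΩ : IsOpen Ω) (hΩc : IsConnected Ω)
    (h0 : (0 : EuclideanSpace ℝ (Fin d)) ∈ Ω) :
    ⋃ n : ℕ, connectedComponentIn (cthickening (1 / (n + 1)) Ωᶜ)ᶜ 0 = Ω := by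
  refine subset_antisymm (iUnion_subset fun n => (connectedComponentIn_subset _ _).trans
    (compl_subset_comm.1 (self_subset_cthickening _))) fun x hx => ?_
  obtain ⟨γ, hγ⟩ := (hΩ.isConnected_iff_isPathConnected.1 hΩc).joinedIn 0 h0 x hx
  obtain ⟨δ, hδ, hdisj⟩ := (disjoint_compl_right_iff_subset.2 (range_subset_iff.2 hγ))
    |>.exists_cthickenings (isCompact_range γ.continuous) hΩ.isClosed_compl
  obtain ⟨n, hn⟩ := exists_nat_one_div_lt hδ
  have hsub : range γ ⊆ (cthickening (1 / (n + 1)) Ωᶜ)ᶜ := fun y hy hy' =>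
    hdisj.ne_of_mem (self_subset_cthickening _ hy) (cthickening_mono hn.le _ hy') rfl
  exact mem_iUnion.2 ⟨n, (isPreconnected_range γ.continuous).subset_connectedComponentIn
    ⟨0, γ.source⟩ hsub ⟨1, γ.target⟩⟩

lemma volume_graph_eq_zero (j : Fin d) {g : (Fin d → ℝ) → ℝ} (hg : Measurable g) :
    volume {w : EuclideanSpace ℝ (Fin d) | g (fun i => if i = j then 0 else w i) = w j} = 0 := by
  obtain ⟨n, rfl⟩ : ∃ n, d = n + 1 := ⟨d - 1, by have := j.pos; omega⟩
  set e := MeasurableEquiv.piFinSuccAbove (fun _ => ℝ) j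
  have hc : Measurable fun v : Fin n → ℝ => g (e.symm (0, v)) :=
    hg.comp (e.symm.measurable.comp measurable_prodMk_left)
  have hset : {w : EuclideanSpace ℝ (Fin (n + 1)) | g (fun i => if i = j then 0 else w i) = w j} =
      WithLp.ofLp ⁻¹' (e ⁻¹' {p | p.1 = g (e.symm (0, p.2))}) := by
    ext w
    have : (fun i => if i = j then (0 : ℝ) else w i) = Function.update w.ofLp j 0 := by
      ext i; simp [Function.update_apply]
    show g (fun i => if i = j then 0 else w i) = w j ↔ w j = g (j.insertNth 0 (j.removeNth w.ofLp))
    rw [Fin.insertNth_removeNth, ← this, eq_comm]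
  have hmeas : MeasurableSet {p : ℝ × (Fin n → ℝ) | p.1 = g (e.symm (0, p.2))} :=
    measurableSet_eq_fun measurable_fst (hc.comp measurable_snd)
  rw [hset, (PiLp.volume_preserving_ofLp _).measure_preimage
      (measurableSet_preimage e.measurable hmeas).nullMeasurableSet,
    (volume_preserving_piFinSuccAbove (fun _ => ℝ) j).measure_preimage hmeas.nullMeasurableSet]
  exact measure_prod_graph_eq_zero _ hc

lemma volume_frontier_eq_zero (hΩ : IsLipschitzDomain d Ω) :
    volume (frontier Ω) = 0 := by
  obtain ⟨hΩo, -, -, hloc⟩ := hΩ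
  refine measure_null_of_locally_null _ fun p hp => ?_
  obtain ⟨U, hU, φ, j, L, g, hg, hmem⟩ := hloc p hp
  have hcont : Continuous fun w : EuclideanSpace ℝ (Fin d) => g fun i => if i = j then 0 else w i :=
    hg.continuous.comp <| continuous_pi fun i => by split_ifs <;> fun_prop
  have hφ : MeasurePreserving φ volume volume := by
    simpa only [EuclideanSpace.euclideanHausdorffMeasure_eq_volume] using
      φ.measurePreserving_euclideanHausdorffMeasure d
  refine ⟨frontier Ω ∩ interior U, inter_mem_nhdsWithin _ (interior_mem_nhds.2 hU),
    measure_mono_null (frontier_inter_subset_of_mem_iff_lt hΩo isOpen_interior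
      (hcont.comp φ.continuous) ((PiLp.continuous_apply 2 _ j).comp φ.continuous)
      fun x hx => hmem x (interior_subset hx)) ?_⟩
  change volume (φ ⁻¹' {w | g (fun i => if i = j then 0 else w i) = w j}) = 0
  rw [hφ.measure_preimage
    (measurableSet_eq_fun hcont.measurable
      (PiLp.continuous_apply 2 _ j).measurable).nullMeasurableSet]
  exact volume_graph_eq_zero j hg.continuous.measurable

def cubeCover (Ω : Set (EuclideanSpace ℝ (Fin d))) (ε : ℝ) : Set (EuclideanSpace ℝ (Fin d)) :=
  ⋃ x ∈ discDomain Ω ε, cube ε x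

lemma cubeCover_eq_biUnion_toFinset (hfin : (discDomain Ω ε).Finite) :
    cubeCover Ω ε = ⋃ x ∈ hfin.toFinset, cube ε x := by
  simp [cubeCover]

lemma cubeCover_sdiff_subset_cthickening (hε : 0 ≤ ε) :
    cubeCover Ω ε \ Ω ⊆ cthickening (d * ε) (frontier Ω) := by
  rintro z ⟨hz, hzΩ⟩
  obtain ⟨x, hx, hzx⟩ := mem_iUnion₂.1 hz
  have hxΩ : x ∈ Ω := (discDomain_subset hx).2
  obtain ⟨w, hw, hzw⟩ := exists_mem_frontier_infDist_compl_eq_dist (s := Ωᶜ) hzΩ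
    ((ne_univ_iff_exists_notMem _).2 ⟨x, not_not.2 hxΩ⟩)
  rw [frontier_compl] at hw
  rw [compl_compl] at hzw
  exact mem_cthickening_of_dist_le z w _ _ hw
    (hzw ▸ (infDist_le_dist_of_mem hxΩ).trans (dist_le_of_mem_cube hε hzx))

lemma tendsto_volume_cubeCover_sdiff (hΩ : IsLipschitzDomain d Ω) :
    Tendsto (fun ε => volume (cubeCover Ω ε \ Ω)) (𝓝[>] 0) (𝓝 0) := by
  have hfr : Tendsto (fun r => volume (cthickening r (frontier Ω))) (𝓝 0) (𝓝 0) := by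
    simpa [volume_frontier_eq_zero hΩ] using tendsto_measure_cthickening_of_isClosed
      ⟨1, one_pos, (hΩ.2.2.1.closure.subset frontier_subset_closure).cthickening
        |>.measure_lt_top (μ := volume) |>.ne⟩
      isClosed_frontier
  refine tendsto_of_tendsto_of_tendsto_of_le_of_le' tendsto_const_nhds
    (hfr.comp (tendsto_const_mul_nhdsGT_zero d)) (Eventually.of_forall fun _ => bot_le) ?_
  filter_upwards [self_mem_nhdsWithin] with ε hε
  exact measure_mono (cubeCover_sdiff_subset_cthickening (le_of_lt (mem_Ioi.1 hε)))

lemma tendsto_volume_sdiff_cubeCover (hd : 0 < d) (hΩ : IsLipschitzDomain d Ω)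
    (h0 : (0 : EuclideanSpace ℝ (Fin d)) ∈ Ω) :
    Tendsto (fun ε => volume (Ω \ cubeCover Ω ε)) (𝓝[>] 0) (𝓝 0) := by
  obtain ⟨hΩo, hΩc, hΩb, -⟩ := hΩ
  set W : ℕ → Set (EuclideanSpace ℝ (Fin d)) :=
    fun n => connectedComponentIn (cthickening (1 / (n + 1)) Ωᶜ)ᶜ 0
  have hW : Monotone W := fun m n hmn => connectedComponentIn_mono _ <|
    compl_subset_compl.2 <| cthickening_mono (by gcongr) _
  have hmeas (n : ℕ) : MeasurableSet (Ω \ W n) :=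
    hΩo.measurableSet.diff isClosed_cthickening.isOpen_compl.connectedComponentIn.measurableSet
  have hlim : Tendsto (fun n => volume (Ω \ W n)) atTop (𝓝 0) := by
    have := tendsto_measure_iInter_atTop (fun n => (hmeas n).nullMeasurableSet)
      (fun m n hmn => sdiff_subset_sdiff_right (hW hmn))
      ⟨0, ((measure_mono sdiff_subset).trans_lt (hΩb.measure_lt_top (μ := volume))).ne⟩
    rwa [← sdiff_iUnion, iUnion_connectedComponentIn_compl_cthickening hΩo hΩc h0, sdiff_self,
      measure_empty] at this
  refine ENNReal.tendsto_nhds_zero.2 fun e he => ?_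
  obtain ⟨N, hN⟩ := (ENNReal.tendsto_nhds_zero.1 hlim e he).exists
  filter_upwards [self_mem_nhdsWithin,
    (tendsto_const_mul_nhdsGT_zero (2 * d)).eventually
      (ge_mem_nhds (by positivity : (0 : ℝ) < 1 / (N + 1)))]
    with ε (hε : 0 < ε) hεN
  refine (measure_mono (sdiff_subset_sdiff_right fun y hy => ?_)).trans hN
  have h0N := connectedComponentIn_nonempty_iff.1 ⟨y, hy⟩
  exact mem_biUnion (latticeFloor_mem_discDomain hd hε isPreconnected_connectedComponentIn
    (mem_connectedComponentIn h0N)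
    ((connectedComponentIn_subset _ _).trans (compl_subset_compl.2 (cthickening_mono hεN _))) hy)
    (mem_cube_latticeFloor hε y)

lemma abs_sum_sub_integral_biUnion_cube_le (hε : 0 < ε) {t : Finset (EuclideanSpace ℝ (Fin d))}
    (ht : ↑t ⊆ latticePts d ε) {f : EuclideanSpace ℝ (Fin d) → ℝ} (hf : Continuous f) {η : ℝ}
    (hη : ∀ x ∈ t, ∀ y ∈ cube ε x, |f y - f x| ≤ η) :
    |ε ^ d * (∑ x ∈ t, f x) - ∫ y in ⋃ x ∈ t, cube ε x, f y| ≤ η * (ε ^ d * t.card) := by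
  have hcube (x : EuclideanSpace ℝ (Fin d)) : volume (cube ε x) < ⊤ := by
    simp [volume_cube hε.le]
  have hint (x) (hx : x ∈ t) : IntegrableOn f (cube ε x) :=
    Measure.integrableOn_of_bounded (hcube x).ne hf.aestronglyMeasurable (M := |f x| + η)
      (ae_restrict_of_forall_mem (measurableSet_cube x) fun y hy => by
        rw [Real.norm_eq_abs]; linarith [abs_sub_abs_le_abs_sub (f y) (f x), hη x hx y hy])
  have hreal (x : EuclideanSpace ℝ (Fin d)) : volume.real (cube ε x) = ε ^ d := by
    rw [measureReal_def, volume_cube hε.le, ENNReal.toReal_ofReal (by positivity)]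
  rw [integral_biUnion_finset t (fun x _ => measurableSet_cube x)
    ((pairwiseDisjoint_cube hε).subset ht) hint, Finset.mul_sum, ← Finset.sum_sub_distrib]
  calc |∑ x ∈ t, (ε ^ d * f x - ∫ y in cube ε x, f y)|
      ≤ ∑ x ∈ t, |ε ^ d * f x - ∫ y in cube ε x, f y| := Finset.abs_sum_le_sum_abs _ _
    _ ≤ ∑ _x ∈ t, η * ε ^ d := Finset.sum_le_sum fun x hx => by
        simpa only [hreal] using
          abs_measureReal_mul_sub_setIntegral_le (hcube x) (hint x hx) (hη x hx)
    _ = η * (ε ^ d * t.card) := by rw [Finset.sum_const, nsmul_eq_mul]; ring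

lemma abs_riemannSum_sub_integral_le (hε₀ : 0 < ε) (hε₁ : ε ≤ 1) (hΩo : IsOpen Ω)
    (hΩb : Bornology.IsBounded Ω) {f : EuclideanSpace ℝ (Fin d) → ℝ} (hf : Continuous f) {M : ℝ}
    (hM : ∀ x, |f x| ≤ M) {η : ℝ} (hη₀ : 0 ≤ η) (hη : ∀ x y, dist x y ≤ d * ε → |f x - f y| ≤ η) :
    |ε ^ d * (∑ᶠ x ∈ discDomain Ω ε, f x) - ∫ x in Ω, f x| ≤
      η * volume.real (cthickening d Ω) +
        M * (volume.real (cubeCover Ω ε \ Ω) + volume.real (Ω \ cubeCover Ω ε)) := by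
  have hfin := discDomain_finite hε₀ hΩb
  have hsub : ↑hfin.toFinset ⊆ latticePts d ε := by
    simpa using discDomain_subset.trans inter_subset_left
  have hT : volume (cubeCover Ω ε) < ⊤ := by
    rw [cubeCover_eq_biUnion_toFinset hfin, volume_biUnion_cube hε₀ hsub]
    exact ENNReal.mul_lt_top (ENNReal.natCast_lt_top _) ENNReal.ofReal_lt_top
  have hcount : ε ^ d * (hfin.toFinset.card : ℝ) ≤ volume.real (cthickening d Ω) := by
    rw [← Set.ncard_eq_toFinset_card _ hfin]
    exact pow_mul_ncard_discDomain_le hε₀ hε₁ hΩb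
  have hriemann := abs_sum_sub_integral_biUnion_cube_le hε₀ hsub hf fun x _ y hy =>
    hη y x (dist_le_of_mem_cube hε₀.le hy)
  rw [← cubeCover_eq_biUnion_toFinset hfin] at hriemann
  have hsymm := abs_setIntegral_sub_setIntegral_le (s := cubeCover Ω ε)
    (MeasurableSet.biUnion hfin.countable fun x _ => measurableSet_cube x) hΩo.measurableSet hT
    (hΩb.measure_lt_top) hf.aestronglyMeasurable hM
  rw [finsum_mem_eq_finite_toFinset_sum _ hfin]
  calc _ ≤ |ε ^ d * (∑ x ∈ hfin.toFinset, f x) - ∫ y in cubeCover Ω ε, f y|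
        + |(∫ y in cubeCover Ω ε, f y) - ∫ x in Ω, f x| := abs_sub_le _ _ _
    _ ≤ _ := add_le_add (hriemann.trans (mul_le_mul_of_nonneg_left hcount hη₀)) hsymm

lemma tendsto_volume_symmDiff_cubeCover (hd : 0 < d) (hΩ : IsLipschitzDomain d Ω)
    (h0 : (0 : EuclideanSpace ℝ (Fin d)) ∈ Ω) :
    Tendsto (fun ε => volume.real (cubeCover Ω ε \ Ω) + volume.real (Ω \ cubeCover Ω ε))
      (𝓝[>] 0) (𝓝 0) := by
  have h := ENNReal.tendsto_toReal ENNReal.zero_ne_top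
  simpa only [measureReal_def, Function.comp_apply, ENNReal.toReal_zero, add_zero] using
    (h.comp (tendsto_volume_cubeCover_sdiff hΩ)).add
      (h.comp (tendsto_volume_sdiff_cubeCover hd hΩ h0))

theorem eventually_abs_riemannSum_sub_integral_lt (hd : 0 < d) (hΩ : IsLipschitzDomain d Ω)
    (h0 : (0 : EuclideanSpace ℝ (Fin d)) ∈ Ω) {F : Set (EuclideanSpace ℝ (Fin d) → ℝ)} {M : ℝ}
    (hM : ∀ f ∈ F, ∀ x, |f x| ≤ M)
    (hF : UniformEquicontinuous fun f : F => (f : EuclideanSpace ℝ (Fin d) → ℝ)) {δ : ℝ}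
    (hδ : 0 < δ) :
    ∀ᶠ ε in 𝓝[>] 0, ∀ f ∈ F, |ε ^ d * (∑ᶠ x ∈ discDomain Ω ε, f x) - ∫ x in Ω, f x| < δ := by
  set C := volume.real (cthickening d Ω)
  have hC : 0 ≤ C := measureReal_nonneg
  set η := δ / (2 * (C + 1))
  set ρ := δ / (2 * (|M| + 1))
  obtain ⟨r, hr, hfr⟩ := uniformEquicontinuous_iff.1 hF η (by positivity)
  filter_upwards [Ioc_mem_nhdsGT one_pos,
    (tendsto_const_mul_nhdsGT_zero d).eventually (gt_mem_nhds hr),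
    (tendsto_volume_symmDiff_cubeCover hd hΩ h0).eventually (gt_mem_nhds (by positivity : 0 < ρ))]
    with ε ⟨hε₀, hε₁⟩ hεr herr f hf
  have hbound := abs_riemannSum_sub_integral_le hε₀ hε₁ hΩ.1 hΩ.2.2.1
    (hF.uniformContinuous ⟨f, hf⟩).continuous (hM f hf) (by positivity : 0 ≤ η)
    fun x y hxy => (hfr x y (hxy.trans_lt hεr) ⟨f, hf⟩).le
  have hηC : η * C < δ / 2 := by
    rw [div_mul_eq_mul_div, div_lt_div_iff₀ (by positivity) two_pos]; nlinarith
  have hMρ : |M| * ρ < δ / 2 := by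
    rw [mul_div_assoc', div_lt_div_iff₀ (by positivity) two_pos]; nlinarith [abs_nonneg M]
  calc _ ≤ _ := hbound
    _ ≤ η * C + |M| * ρ := by gcongr; exact le_abs_self M
    _ < δ := by linarith

lemma volume_real_pos (hΩ : IsLipschitzDomain d Ω) (h0 : (0 : EuclideanSpace ℝ (Fin d)) ∈ Ω) :
    0 < volume.real Ω :=
  ENNReal.toReal_pos (hΩ.1.measure_pos volume ⟨0, h0⟩).ne'
    (hΩ.2.2.1.measure_lt_top (μ := volume)).ne

lemma eventually_half_volume_lt_pow_mul_ncard (hd : 0 < d) (hΩ : IsLipschitzDomain d Ω)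
    (h0 : (0 : EuclideanSpace ℝ (Fin d)) ∈ Ω) :
    ∀ᶠ ε in 𝓝[>] 0, volume.real Ω / 2 < ε ^ d * (discDomain Ω ε).ncard := by
  filter_upwards [Ioc_mem_nhdsGT one_pos, (tendsto_volume_symmDiff_cubeCover hd hΩ h0).eventually
    (gt_mem_nhds (half_pos (volume_real_pos hΩ h0)))] with ε ⟨hε₀, hε₁⟩ herr
  have hfin := discDomain_finite hε₀ hΩ.2.2.1
  have := abs_riemannSum_sub_integral_le hε₀ hε₁ hΩ.1 hΩ.2.2.1 continuous_const (M := 1)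
    (fun _ => (abs_one).le) le_rfl fun _ _ _ => by simp
  simp only [finsum_mem_eq_finite_toFinset_sum _ hfin, Finset.sum_const,
    ← Set.ncard_eq_toFinset_card _ hfin, nsmul_eq_mul, mul_one, setIntegral_const, smul_eq_mul,
    zero_mul, zero_add, one_mul] at this
  linarith [(abs_le.1 this).1]

theorem exists_inv_le_pow_mul_ncard_le (hd : 0 < d) (hΩ : IsLipschitzDomain d Ω)
    (h0 : (0 : EuclideanSpace ℝ (Fin d)) ∈ Ω) :
    ∃ C : ℝ, 1 ≤ C ∧ ∀ ε ∈ Ioo (0 : ℝ) 1,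
      C⁻¹ ≤ ε ^ d * (discDomain Ω ε).ncard ∧ ε ^ d * (discDomain Ω ε).ncard ≤ C := by
  obtain ⟨ε₁, hε₁, hsmall⟩ :=
    (nhdsGT_basis 0).eventually_iff.1 (eventually_half_volume_lt_pow_mul_ncard hd hΩ h0)
  set L := min (volume.real Ω / 2) (ε₁ ^ d)
  have hL : 0 < L := lt_min (half_pos (volume_real_pos hΩ h0)) (by positivity)
  have hlower : ∀ ε ∈ Ioo (0 : ℝ) 1, L ≤ ε ^ d * (discDomain Ω ε).ncard := by
    rintro ε ⟨hε₀, -⟩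
    rcases lt_or_ge ε ε₁ with h | h
    · exact (min_le_left _ _).trans (hsmall ⟨hε₀, h⟩).le
    · have : (1 : ℝ) ≤ (discDomain Ω ε).ncard := by
        exact_mod_cast (Set.ncard_pos (discDomain_finite hε₀ hΩ.2.2.1)).2
          ⟨0, zero_mem_discDomain hd hε₀ h0⟩
      calc L ≤ ε₁ ^ d := min_le_right _ _
        _ ≤ ε ^ d * 1 := by rw [mul_one]; gcongr
        _ ≤ ε ^ d * (discDomain Ω ε).ncard := by gcongr
  refine ⟨max 1 (max L⁻¹ (volume.real (cthickening d Ω))), le_max_left _ _, fun ε hε => ⟨?_, ?_⟩⟩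
  · exact (inv_le_of_inv_le₀ hL ((le_max_left _ _).trans (le_max_right _ _))).trans (hlower ε hε)
  · exact (pow_mul_ncard_discDomain_le hε.1 hε.2.le hΩ.2.2.1).trans
      ((le_max_right _ _).trans (le_max_right _ _))

end DiscreteDomain

open DiscreteDomain

/-- For every uniformly bounded, uniformly equicontinuous family `F` of
bounded continuous functions on `ℝ^d`, `ε^d Σ_{x∈Ω_ε} f(x) → ∫_Ω f` uniformly in `f ∈ F`
as `ε → 0`; in particular `ε^d · #Ω_ε` is bounded above and below. -/
theorem discrete_volume_measure_weak_convergence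
    (d : ℕ) (hd : 2 ≤ d) (Ω : Set (EuclideanSpace ℝ (Fin d)))
    (hΩ : IsLipschitzDomain d Ω) (h0 : (0 : EuclideanSpace ℝ (Fin d)) ∈ Ω) :
    (∀ F : Set (EuclideanSpace ℝ (Fin d) → ℝ),
      (∃ M : ℝ, ∀ f ∈ F, ∀ x, |f x| ≤ M) →
      UniformEquicontinuous (fun f : F => (f : EuclideanSpace ℝ (Fin d) → ℝ)) →
      ∀ δ > (0:ℝ), ∃ ε₀ > (0:ℝ), ∀ ε ∈ Set.Ioo (0:ℝ) 1, ε < ε₀ → ∀ f ∈ F,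
        |ε ^ d * (∑ᶠ x ∈ discDomain Ω ε, f x) - ∫ x in Ω, f x| < δ)
    ∧ ∃ C : ℝ, 1 ≤ C ∧ ∀ ε ∈ Set.Ioo (0:ℝ) 1,
        C⁻¹ ≤ ε ^ d * ((discDomain Ω ε).ncard : ℝ)
          ∧ ε ^ d * ((discDomain Ω ε).ncard : ℝ) ≤ C := by
  have hd₀ : 0 < d := by omega
  refine ⟨fun F ⟨M, hM⟩ hF δ hδ => ?_, exists_inv_le_pow_mul_ncard_le hd₀ hΩ h0⟩
  obtain ⟨ε₀, hε₀, h⟩ := (nhdsGT_basis 0).eventually_iff.1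
    (eventually_abs_riemannSum_sub_integral_lt hd₀ hΩ h0 hM hF hδ)
  exact ⟨ε₀, hε₀, fun ε hε hεε₀ f hf => h ⟨hε.1, hεε₀⟩ f hf⟩

end
end
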